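/- arXiv:1601.00932 — 4 statements merged into one kernel-verified Lean document; each statement's English description precedes it below -/
import Mathlib

section
/- Let (S₁, ω₁) and (S₂, ω₂) be symplectic vector spaces and equip S₁ × S₂ with the product form ((u₁,u₂),(v₁,v₂)) ↦ ω₁(u₁,v₁) + ω₂(u₂,v₂). If λ ⊆ S₁ × S₂ is a coisotropic subspace, then each projection pr_j(λ) ⊆ S_j (j = 1, 2) is a coisotropic subspace of (S_j, ω_j). (This is the unnamed Lemma in the proof of Proposition 3.1, used for the implication (c) ⇒ (a).) -/
/-- The symplectic orthogonal of a subset `W` with respect to a bilinear pairing `ω`. -/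
def symplOrth {V : Type*} (ω : V → V → ℝ) (W : Set V) : Set V :=
  {v | ∀ w ∈ W, ω v w = 0}

/-- A subset `W` is coisotropic for `ω` if its symplectic orthogonal is contained in `W`. -/
def IsCoisotropic {V : Type*} (ω : V → V → ℝ) (W : Set V) : Prop :=
  symplOrth ω W ⊆ W

/-- If `λ` is a coisotropic subspace of a product of symplectic vector
spaces `S₁ × S₂` (with the product symplectic form), then each projection `pr_j(λ)`
is a coisotropic subspace of `S_j`. -/
theorem coisotropic_projection
    (S₁ S₂ : Type*)
    [AddCommGroup S₁] [Module ℝ S₁] [FiniteDimensional ℝ S₁]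
    [AddCommGroup S₂] [Module ℝ S₂] [FiniteDimensional ℝ S₂]
    (ω₁ : S₁ →ₗ[ℝ] S₁ →ₗ[ℝ] ℝ) (ω₂ : S₂ →ₗ[ℝ] S₂ →ₗ[ℝ] ℝ)
    (halt₁ : ∀ v, ω₁ v v = 0) (halt₂ : ∀ v, ω₂ v v = 0)
    (hnd₁ : ∀ v, (∀ w, ω₁ v w = 0) → v = 0)
    (hnd₂ : ∀ v, (∀ w, ω₂ v w = 0) → v = 0)
    (lam : Submodule ℝ (S₁ × S₂))
    (hco : IsCoisotropic (fun u v => ω₁ u.1 v.1 + ω₂ u.2 v.2) (lam : Set (S₁ × S₂))) :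
    IsCoisotropic (fun u v => ω₁ u v)
        ((lam.map (LinearMap.fst ℝ S₁ S₂) : Submodule ℝ S₁) : Set S₁) ∧
    IsCoisotropic (fun u v => ω₂ u v)
        ((lam.map (LinearMap.snd ℝ S₁ S₂) : Submodule ℝ S₂) : Set S₂) := by
  constructor
  · intro v hv
    have h : (v, (0:S₂)) ∈ lam := by
      apply hco
      intro w hw
      have : ω₂ (0:S₂) w.2 = 0 := by simp
      simp only [this, add_zero]
      exact hv w.1 ⟨w, hw, rfl⟩
    exact ⟨(v, 0), h, rfl⟩
  · intro v hv
    have h : ((0:S₁), v) ∈ lam := by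
      apply hco
      intro w hw
      have : ω₁ (0:S₁) w.1 = 0 := by simp
      simp only [this, zero_add]
      exact hv w.2 ⟨w, hw, rfl⟩
    exact ⟨(0, v), h, rfl⟩
end

section
/- Let (S, ω_S) and (T, ω_T) be symplectic vector spaces, H ⊆ S a linear subspace, and μ : H → T a surjective linear map satisfying ω_T(μ(u), μ(v)) = ω_S(u, v) for all u, v ∈ H. Then H is coisotropic in S if and only if the graph Gr(μ) = {(u, μ(u)) : u ∈ H} is a Lagrangian subspace of S × T equipped with the twisted product form ((u₁,u₂),(v₁,v₂)) ↦ ω_S(u₁,v₁) − ω_T(u₂,v₂). (This is the pointwise linear-algebra content of Proposition 3.1(1), equivalence (a) ⇔ (c).) -/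
/-- The twisted product form on `S × T`: `((u₁,u₂),(v₁,v₂)) ↦ ωS u₁ v₁ − ωT u₂ v₂`. -/
def twistedForm {S T : Type*} (ωS : S → S → ℝ) (ωT : T → T → ℝ) :
    S × T → S × T → ℝ :=
  fun u v => ωS u.1 v.1 - ωT u.2 v.2

/-- With `μ : H → T` surjective linear and compatible with the symplectic
forms, `H` is coisotropic in `S` if and only if the graph of `μ` is a Lagrangian subspace of
`S × (−T)`. -/
theorem coisotropic_iff_graph_lagrangian
    (S T : Type*)
    [AddCommGroup S] [Module ℝ S] [FiniteDimensional ℝ S]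
    [AddCommGroup T] [Module ℝ T] [FiniteDimensional ℝ T]
    (ωS : S →ₗ[ℝ] S →ₗ[ℝ] ℝ) (ωT : T →ₗ[ℝ] T →ₗ[ℝ] ℝ)
    (haltS : ∀ v, ωS v v = 0) (haltT : ∀ v, ωT v v = 0)
    (hndS : ∀ v, (∀ w, ωS v w = 0) → v = 0)
    (hndT : ∀ v, (∀ w, ωT v w = 0) → v = 0)
    (H : Submodule ℝ S) (μ : H →ₗ[ℝ] T)
    (hsurj : Function.Surjective μ)
    (hcompat : ∀ u v : H, ωT (μ u) (μ v) = ωS u v) :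
    symplOrth (fun u v => ωS u v) (H : Set S) ⊆ (H : Set S) ↔
      {p : S × T | ∃ hp : p.1 ∈ H, μ ⟨p.1, hp⟩ = p.2} =
        symplOrth (twistedForm (fun u v => ωS u v) (fun u v => ωT u v))
          {p : S × T | ∃ hp : p.1 ∈ H, μ ⟨p.1, hp⟩ = p.2} := by
  constructor
  · intro hco
    apply Set.Subset.antisymm
    · rintro ⟨x, t⟩ ⟨hx, hxt⟩ ⟨y, s⟩ ⟨hy, hys⟩
      have hxt' : μ ⟨x, hx⟩ = t := hxt
      have hys' : μ ⟨y, hy⟩ = s := hys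
      simp only [twistedForm]
      rw [← hxt', ← hys', hcompat ⟨x, hx⟩ ⟨y, hy⟩]
      ring
    · rintro ⟨x, t⟩ hp
      obtain ⟨s, hs⟩ := hsurj t
      have key : ∀ u : H, ωS (x - (s : S)) u = 0 := by
        intro u
        have h1 : ωS x u - ωT t (μ u) = 0 := hp ((u : S), μ u) ⟨u.2, rfl⟩
        have h2 : ωT t (μ u) = ωS (s : S) u := by rw [← hs, hcompat]
        simp only [map_sub, LinearMap.sub_apply]
        rw [← h2]; linarith
      have hxs : x - (s : S) ∈ H := hco (fun w hw => key ⟨w, hw⟩)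
      have hxH : x ∈ H := by
        have := H.add_mem hxs s.2
        simpa using this
      refine ⟨hxH, ?_⟩
      have hz : μ ⟨x - (s : S), hxs⟩ = 0 := by
        apply hndT
        intro w
        obtain ⟨v, hv⟩ := hsurj w
        rw [← hv, hcompat]
        exact key v
      have hsplit : (⟨x, hxH⟩ : H) = ⟨x - (s : S), hxs⟩ + s := by
        apply Subtype.ext; simp
      rw [hsplit, map_add, hz, zero_add, hs]
  · intro heq v hv
    have : (v, (0 : T)) ∈ symplOrth (twistedForm (fun u v => ωS u v) (fun u v => ωT u v))
        {p : S × T | ∃ hp : p.1 ∈ H, μ ⟨p.1, hp⟩ = p.2} := by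
      rintro ⟨y, s⟩ ⟨hy, hys⟩
      have h0 : ωS v y = 0 := hv y hy
      simp only [twistedForm, map_zero, LinearMap.zero_apply, h0]
      ring
    rw [← heq] at this
    exact this.1
end

section
/- Let X and Y be finite-dimensional real vector spaces, Z ⊆ X a linear subspace, and φ : Z → Y a surjective linear map. Equip X × X* with the canonical symplectic form ω_X((a,α),(b,β)) = β(a) − α(b), and similarly Y × Y* with ω_Y. Set H = {(z, ξ) ∈ X × X* : z ∈ Z and ξ(k) = 0 for all k ∈ ker φ}. Then: (1) H is a coisotropic subspace of (X × X*, ω_X); (2) for each (z, ξ) ∈ H there is a unique η ∈ Y* with η(φ(w)) = ξ(w) for all w ∈ Z, and the map μ : H → Y × Y* defined by μ(z, ξ) = (φ(z), η) is a surjective linear map whose graph {((z,ξ), μ(z,ξ)) : (z,ξ) ∈ H} is a Lagrangian subspace of (X × X*) × (Y × Y*) equipped with the twisted product form ((u₁,u₂),(v₁,v₂)) ↦ ω_X(u₁,v₁) − ω_Y(u₂,v₂). (This is the pointwise linear-algebra content of Proposition 3.2(1): for a submersion f : Z → Y defined on a submanifold Z ⊆ X, the set H = (ker df)^⊥ ⊆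 T*X and the induced map μ(x,ξ) = (f(x), ᵗdf⁻¹(ξ)) have Lagrangian graph.) -/
/-- The canonical symplectic form on `E × E*`: `ω((a,α),(b,β)) = β(a) − α(b)`. -/
def canonForm (E : Type*) [AddCommGroup E] [Module ℝ E] :
    E × Module.Dual ℝ E → E × Module.Dual ℝ E → ℝ :=
  fun u v => v.2 u.1 - u.2 v.1

/-!
`H` contains the conormal space `Z × Z⁰`, which is Lagrangian, so `H^ω ⊆ (Z × Z⁰)^ω = Z × Z⁰ ⊆ H`.

The graph of `μ` is the relation `{((z, ξ), (φ z, η)) : z ∈ Z, ξ|_Z = η ∘ φ}`; since `φ` is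
surjective, this relation is the graph of a function on `H`, so `μ` is linear and onto. The
relation is Lagrangian for every linear `φ`: pairing against `((w, 0), (φ w, 0))` forces
`ξ|_Z = η ∘ φ`, pairing against `((0, ξ), (0, 0))` with `ξ ∈ Z⁰` forces the base point into `Z`,
and pairing against extensions of the functionals `η ∘ φ` forces the image point to be `φ z`.
-/

open Module

section SymplecticOrthogonal

variable {V : Type*}

theorem symplOrth_anti {ω : V → V → ℝ} {S T : Set V} (h : S ⊆ T) :
    symplOrth ω T ⊆ symplOrth ω S :=
  fun _ hv w hw => hv w (h hw)

theorem symplOrth_subset_of_lagrangian_subset {ω : V → V → ℝ} {L S : Set V}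
    (hL : symplOrth ω L = L) (hLS : L ⊆ S) : symplOrth ω S ⊆ S :=
  (symplOrth_anti hLS).trans (hL.trans_subset hLS)

end SymplecticOrthogonal

section Conormal

variable {X Y : Type*} [AddCommGroup X] [Module ℝ X] [AddCommGroup Y] [Module ℝ Y]

theorem symplOrth_canonForm_prod_dualAnnihilator (U : Submodule ℝ X) :
    symplOrth (canonForm X) ((U : Set X) ×ˢ (U.dualAnnihilator : Set (Dual ℝ X))) =
      (U : Set X) ×ˢ (U.dualAnnihilator : Set (Dual ℝ X)) := by
  ext ⟨a, α⟩
  constructor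
  · intro h
    refine ⟨?_, (Submodule.mem_dualAnnihilator _).2 fun b hb => ?_⟩
    · rw [SetLike.mem_coe, ← Subspace.forall_mem_dualAnnihilator_apply_eq_zero_iff]
      intro β hβ
      simpa [canonForm] using h (0, β) ⟨U.zero_mem, hβ⟩
    · simpa [canonForm] using h (b, 0) ⟨hb, zero_mem _⟩
  · rintro ⟨ha, hα⟩ ⟨b, β⟩ ⟨hb, hβ⟩
    rw [SetLike.mem_coe, Submodule.mem_dualAnnihilator] at hα hβ
    show β a - α b = 0
    rw [hβ a ha, hα b hb, sub_zero]

variable {Z : Submodule ℝ X} (φ : Z →ₗ[ℝ] Y)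

def kerConormal : Set (X × Dual ℝ X) :=
  {p | p.1 ∈ Z ∧ ∀ k : Z, φ k = 0 → p.2 k = 0}

theorem prod_dualAnnihilator_subset_kerConormal :
    (Z : Set X) ×ˢ (Z.dualAnnihilator : Set (Dual ℝ X)) ⊆ kerConormal φ :=
  fun _ ⟨hz, hξ⟩ => ⟨hz, fun k _ => (Submodule.mem_dualAnnihilator _).1 hξ k k.2⟩

theorem symplOrth_kerConormal_subset :
    symplOrth (canonForm X) (kerConormal φ) ⊆ kerConormal φ :=
  symplOrth_subset_of_lagrangian_subset (symplOrth_canonForm_prod_dualAnnihilator Z)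
    (prod_dualAnnihilator_subset_kerConormal φ)

/-- The conormal space of the graph of `φ`, with the sign of the `Y*`-component flipped. -/
def conormalGraph : Submodule ℝ ((X × Dual ℝ X) × (Y × Dual ℝ Y)) where
  carrier := {pq | ∃ z : Z, (z : X) = pq.1.1 ∧ φ z = pq.2.1 ∧ ∀ w : Z, pq.2.2 (φ w) = pq.1.2 w}
  add_mem' := by
    rintro ⟨⟨_, ξ⟩, _, η⟩ ⟨⟨_, ξ'⟩, _, η'⟩ ⟨z, rfl, rfl, h⟩ ⟨z', rfl, rfl, h'⟩
    exact ⟨z + z', by simp, by simp, fun w => by simp [h w, h' w]⟩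
  zero_mem' := ⟨0, by simp, by simp, fun _ => rfl⟩
  smul_mem' := by
    rintro c ⟨⟨_, ξ⟩, _, η⟩ ⟨z, rfl, rfl, h⟩
    exact ⟨c • z, by simp, by simp, fun w => by simp [h w]⟩

theorem mem_conormalGraph_of_mem_kerConormal {μ : X × Dual ℝ X → Y × Dual ℝ Y}
    (hμ : ∀ p ∈ kerConormal φ, ∃ hz : p.1 ∈ Z,
      (μ p).1 = φ ⟨p.1, hz⟩ ∧ ∀ w : Z, (μ p).2 (φ w) = p.2 w)
    {p : X × Dual ℝ X} (hp : p ∈ kerConormal φ) : (p, μ p) ∈ conormalGraph φ :=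
  let ⟨hz, h₁, h₂⟩ := hμ p hp
  ⟨⟨p.1, hz⟩, rfl, h₁.symm, h₂⟩

theorem mem_kerConormal_of_mem_conormalGraph {p : X × Dual ℝ X} {q : Y × Dual ℝ Y}
    (h : (p, q) ∈ conormalGraph φ) : p ∈ kerConormal φ := by
  obtain ⟨z, hz, -, hq⟩ := h
  exact ⟨hz ▸ z.2, fun k hk => by rw [← hq k, hk, map_zero]⟩

theorem eq_of_mem_conormalGraph (hφ : Function.Surjective φ) {p : X × Dual ℝ X}
    {q q' : Y × Dual ℝ Y} (h : (p, q) ∈ conormalGraph φ) (h' : (p, q') ∈ conormalGraph φ) :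
    q = q' := by
  obtain ⟨z, hz, hq₁, hq₂⟩ := h
  obtain ⟨z', hz', hq₁', hq₂'⟩ := h'
  obtain rfl : z = z' := Subtype.ext (hz.trans hz'.symm)
  exact Prod.ext (hq₁.symm.trans hq₁')
    ((LinearMap.cancel_right hφ).1 (LinearMap.ext fun w => (hq₂ w).trans (hq₂' w).symm))

theorem exists_mem_conormalGraph (hφ : Function.Surjective φ) (q : Y × Dual ℝ Y) :
    ∃ p, (p, q) ∈ conormalGraph φ := by
  obtain ⟨z, hz⟩ := hφ q.1
  obtain ⟨ξ, hξ⟩ := LinearMap.exists_extend (q.2 ∘ₗ φ)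
  exact ⟨(z, ξ), z, rfl, hz, fun w => (LinearMap.congr_fun hξ w).symm⟩

theorem conormalGraph_subset_symplOrth :
    (conormalGraph φ : Set _) ⊆
      symplOrth (twistedForm (canonForm X) (canonForm Y)) (conormalGraph φ) := by
  rintro ⟨⟨_, ξ⟩, _, η⟩ ⟨z, rfl, rfl, h⟩ ⟨⟨_, ξ'⟩, _, η'⟩ ⟨w, rfl, rfl, h'⟩
  simp only [twistedForm, canonForm, h, h']
  ring

theorem symplOrth_conormalGraph_subset :
    symplOrth (twistedForm (canonForm X) (canonForm Y)) (conormalGraph φ) ⊆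
      conormalGraph φ := by
  rintro ⟨⟨v, ν⟩, ⟨y, η⟩⟩ h
  have pair : ∀ pq ∈ conormalGraph φ,
      (pq.1.2 v - ν pq.1.1) - (pq.2.2 y - η pq.2.1) = 0 := h
  have hν : ∀ w : Z, η (φ w) = ν w := fun w => by
    have := pair ((w, 0), (φ w, 0)) ⟨w, rfl, rfl, fun _ => rfl⟩
    simp only [LinearMap.zero_apply] at this
    linarith
  have hv : v ∈ Z := by
    rw [← Subspace.forall_mem_dualAnnihilator_apply_eq_zero_iff]
    intro ξ hξ
    simpa using pair ((0, ξ), (0, 0))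
      ⟨0, rfl, map_zero φ, fun w => ((Submodule.mem_dualAnnihilator _).1 hξ w w.2).symm⟩
  have hy : φ ⟨v, hv⟩ = y := by
    rw [← sub_eq_zero, ← Module.forall_dual_apply_eq_zero_iff ℝ]
    intro θ
    obtain ⟨ξ, hξ⟩ := LinearMap.exists_extend (θ ∘ₗ φ)
    have := pair ((0, ξ), (0, θ)) ⟨0, rfl, map_zero φ, fun w => (LinearMap.congr_fun hξ w).symm⟩
    have hξv : ξ v = θ (φ ⟨v, hv⟩) := LinearMap.congr_fun hξ ⟨v, hv⟩
    simp only [map_zero, sub_zero] at this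
    rwa [map_sub, ← hξv]
  exact ⟨⟨v, hv⟩, rfl, hy, hν⟩

theorem symplOrth_conormalGraph :
    symplOrth (twistedForm (canonForm X) (canonForm Y)) (conormalGraph φ) = conormalGraph φ :=
  (symplOrth_conormalGraph_subset φ).antisymm (conormalGraph_subset_symplOrth φ)

end Conormal

theorem coisotropic_of_submersion_graph_lagrangian_general
    (X Y : Type*)
    [AddCommGroup X] [Module ℝ X]
    [AddCommGroup Y] [Module ℝ Y]
    (Z : Submodule ℝ X) (φ : Z →ₗ[ℝ] Y)
    (hφ : Function.Surjective φ)
    (H : Set (X × Module.Dual ℝ X))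
    (hH : H = {p | p.1 ∈ Z ∧ ∀ k : Z, φ k = 0 → p.2 k = 0})
    (μ : X × Module.Dual ℝ X → Y × Module.Dual ℝ Y)
    (hμ : ∀ p ∈ H, ∃ hz : p.1 ∈ Z,
      (μ p).1 = φ ⟨p.1, hz⟩ ∧ ∀ w : Z, (μ p).2 (φ w) = p.2 w) :
    -- (1) `H` is coisotropic
    (symplOrth (canonForm X) H ⊆ H) ∧
    -- (2a) uniqueness of `η`
    (∀ p ∈ H, ∃! η : Module.Dual ℝ Y, ∀ w : Z, η (φ w) = p.2 w) ∧
    -- (2b) `μ` is additive and homogeneous on `H`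
    (∀ p ∈ H, ∀ q ∈ H, μ (p + q) = μ p + μ q) ∧
    (∀ (c : ℝ), ∀ p ∈ H, μ (c • p) = c • μ p) ∧
    -- (2c) `μ` is surjective from `H` onto `Y × Y*`
    (∀ q : Y × Module.Dual ℝ Y, ∃ p ∈ H, μ p = q) ∧
    -- (2d) the graph of `μ` over `H` is Lagrangian in `(X × X*) × (−(Y × Y*))`
    ({pq : (X × Module.Dual ℝ X) × (Y × Module.Dual ℝ Y) | pq.1 ∈ H ∧ μ pq.1 = pq.2} =
      symplOrth (twistedForm (canonForm X) (canonForm Y))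
        {pq : (X × Module.Dual ℝ X) × (Y × Module.Dual ℝ Y) | pq.1 ∈ H ∧ μ pq.1 = pq.2}) := by
  obtain rfl : H = kerConormal φ := hH
  have graph_mem : ∀ p ∈ kerConormal φ, (p, μ p) ∈ conormalGraph φ :=
    fun _ => mem_conormalGraph_of_mem_kerConormal φ hμ
  have eq_of_mem : ∀ {p q}, (p, q) ∈ conormalGraph φ → μ p = q := fun h =>
    eq_of_mem_conormalGraph φ hφ (graph_mem _ (mem_kerConormal_of_mem_conormalGraph φ h)) h
  have graph_eq : {pq : (X × Dual ℝ X) × (Y × Dual ℝ Y) | pq.1 ∈ kerConormal φ ∧ μ pq.1 = pq.2} =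
      conormalGraph φ :=
    Set.ext fun ⟨p, q⟩ => ⟨fun ⟨hp, (hq : μ p = q)⟩ => hq ▸ graph_mem p hp,
      fun h => ⟨mem_kerConormal_of_mem_conormalGraph φ h, eq_of_mem h⟩⟩
  refine ⟨symplOrth_kerConormal_subset φ, fun p hp => ?_, fun p hp q hq => ?_,
    fun c p hp => ?_, fun q => ?_, ?_⟩
  · obtain ⟨-, -, -, hμp⟩ := graph_mem p hp
    exact ⟨(μ p).2, hμp, fun η hη =>
      (LinearMap.cancel_right hφ).1 (LinearMap.ext fun w => (hη w).trans (hμp w).symm)⟩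
  · exact eq_of_mem ((conormalGraph φ).add_mem (graph_mem p hp) (graph_mem q hq))
  · exact eq_of_mem ((conormalGraph φ).smul_mem c (graph_mem p hp))
  · obtain ⟨p, hp⟩ := exists_mem_conormalGraph φ hφ q
    exact ⟨p, mem_kerConormal_of_mem_conormalGraph φ hp, eq_of_mem hp⟩
  · rw [graph_eq, symplOrth_conormalGraph]

/-- Let `Z ⊆ X` be a subspace and `φ : Z → Y` a surjective linear map.
Set `H = {(z,ξ) : z ∈ Z, ξ|_{ker φ} = 0} ⊆ X × X*`. Then `H` is coisotropic for the
canonical symplectic form; for each `(z,ξ) ∈ H` there is a unique `η ∈ Y*` with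
`η ∘ φ = ξ|_Z`; and the induced map `μ(z,ξ) = (φ(z), η)` is linear on `H`, surjective onto
`Y × Y*`, and its graph is a Lagrangian subspace of `(X × X*) × (−(Y × Y*))`. -/
theorem coisotropic_of_submersion_graph_lagrangian
    (X Y : Type*)
    [AddCommGroup X] [Module ℝ X] [FiniteDimensional ℝ X]
    [AddCommGroup Y] [Module ℝ Y] [FiniteDimensional ℝ Y]
    (Z : Submodule ℝ X) (φ : Z →ₗ[ℝ] Y)
    (hφ : Function.Surjective φ)
    (H : Set (X × Module.Dual ℝ X))
    (hH : H = {p | p.1 ∈ Z ∧ ∀ k : Z, φ k = 0 → p.2 k = 0})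
    (μ : X × Module.Dual ℝ X → Y × Module.Dual ℝ Y)
    (hμ : ∀ p ∈ H, ∃ hz : p.1 ∈ Z,
      (μ p).1 = φ ⟨p.1, hz⟩ ∧ ∀ w : Z, (μ p).2 (φ w) = p.2 w) :
    -- (1) `H` is coisotropic
    (symplOrth (canonForm X) H ⊆ H) ∧
    -- (2a) uniqueness of `η`
    (∀ p ∈ H, ∃! η : Module.Dual ℝ Y, ∀ w : Z, η (φ w) = p.2 w) ∧
    -- (2b) `μ` is additive and homogeneous on `H`
    (∀ p ∈ H, ∀ q ∈ H, μ (p + q) = μ p + μ q) ∧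
    (∀ (c : ℝ), ∀ p ∈ H, μ (c • p) = c • μ p) ∧
    -- (2c) `μ` is surjective from `H` onto `Y × Y*`
    (∀ q : Y × Module.Dual ℝ Y, ∃ p ∈ H, μ p = q) ∧
    -- (2d) the graph of `μ` over `H` is Lagrangian in `(X × X*) × (−(Y × Y*))`
    ({pq : (X × Module.Dual ℝ X) × (Y × Module.Dual ℝ Y) | pq.1 ∈ H ∧ μ pq.1 = pq.2} =
      symplOrth (twistedForm (canonForm X) (canonForm Y))
        {pq : (X × Module.Dual ℝ X) × (Y × Module.Dual ℝ Y) | pq.1 ∈ H ∧ μ pq.1 = pq.2}) :=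
  coisotropic_of_submersion_graph_lagrangian_general X Y Z φ hφ H hH μ hμ
end

section
/- In a groupoid G, a set Λ of morphisms admits an inverse — that is, a set Λ' of morphisms with Λ·Λ' = r(Λ) and Λ'·Λ = s(Λ) — if and only if the source map γ ↦ s(γ) and the target map γ ↦ r(γ) are both injective on Λ; and in that case Λ* = {γ⁻¹ : γ ∈ Λ} is such an inverse. (This is the set-theoretic skeleton of Theorem 4.7: a Lagrangian submanifold of the symplectic groupoid T*G is invertible if and only if it is a Lagrangian bisection, and then its image under the groupoid inversion is an inverse.) -/
open CategoryTheory

/-- A morphism of a groupoid `G`, bundled with its source and target objects. -/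
structure GpdMor (G : Type*) [Groupoid G] where
  src : G
  tgt : G
  hom : src ⟶ tgt

namespace GpdMor

variable {G : Type*} [Groupoid G]

/-- The composition `γ₁ ∘ γ₂`, defined when `s(γ₁) = r(γ₂)`; its source is `s(γ₂)` and its
target is `r(γ₁)`. -/
def comp (γ₁ γ₂ : GpdMor G) (h : γ₁.src = γ₂.tgt) : GpdMor G :=
  ⟨γ₂.src, γ₁.tgt, γ₂.hom ≫ eqToHom h.symm ≫ γ₁.hom⟩

/-- The inverse morphism `γ⁻¹`. -/
noncomputable def inv (γ : GpdMor G) : GpdMor G :=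
  ⟨γ.tgt, γ.src, CategoryTheory.inv γ.hom⟩

/-- The identity morphism at an object `x`. -/
def id (x : G) : GpdMor G := ⟨x, x, 𝟙 x⟩

/-- The product `Λ₁·Λ₂ = {γ₁ ∘ γ₂ : γ₁ ∈ Λ₁, γ₂ ∈ Λ₂, s(γ₁) = r(γ₂)}`. -/
def setMul (Λ₁ Λ₂ : Set (GpdMor G)) : Set (GpdMor G) :=
  {γ | ∃ γ₁ ∈ Λ₁, ∃ γ₂ ∈ Λ₂, ∃ h : γ₁.src = γ₂.tgt, γ = comp γ₁ γ₂ h}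

/-- `r(Λ) = {id_{r(γ)} : γ ∈ Λ}`. -/
def tgtSet (Λ : Set (GpdMor G)) : Set (GpdMor G) :=
  {δ | ∃ γ ∈ Λ, δ = GpdMor.id γ.tgt}

/-- `s(Λ) = {id_{s(γ)} : γ ∈ Λ}`. -/
def srcSet (Λ : Set (GpdMor G)) : Set (GpdMor G) :=
  {δ | ∃ γ ∈ Λ, δ = GpdMor.id γ.src}

end GpdMor

open GpdMor

/-- `Λ* = {γ⁻¹ : γ ∈ Λ}`. -/
noncomputable def starSet {G : Type*} [Groupoid G] (Λ : Set (GpdMor G)) : Set (GpdMor G) :=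
  GpdMor.inv '' Λ

/-! If `Λ·Λ'` consists of identities, every `γ ∈ Λ` composable with some `α ∈ Λ'` equals `α⁻¹`;
since `s(Λ) = Λ'·Λ` provides such an `α` with `r(α) = s(γ)`, two elements of `Λ` with the same
source are both `α⁻¹`. Conversely, if `s` is injective on `Λ`, a product `γ ∘ δ⁻¹` in `Λ·Λ*`
forces `γ = δ`, so it is the identity `id_{r(γ)}`; dually for `Λ*·Λ`. -/

namespace GpdMor

variable {G : Type*} [Groupoid G]

@[simp]
theorem comp_inv_self (γ : GpdMor G) : comp γ (inv γ) rfl = id γ.tgt := by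
  simp [comp, inv, id]

@[simp]
theorem inv_comp_self (γ : GpdMor G) : comp (inv γ) γ rfl = id γ.src := by
  simp [comp, inv, id]

theorem eq_inv_of_comp_eq_id_left {γ α : GpdMor G} (h : γ.src = α.tgt) {x : G}
    (hx : comp γ α h = id x) : γ = inv α := by
  obtain ⟨_, _, g⟩ := γ
  obtain ⟨_, _, f⟩ := α
  dsimp only at h
  subst h
  simp only [comp, id, mk.injEq] at hx
  obtain ⟨rfl, rfl, hfg⟩ := hx
  simp only [eqToHom_refl, Category.id_comp, heq_eq_eq] at hfg
  simp [inv, IsIso.eq_inv_of_hom_inv_id hfg]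

theorem eq_inv_of_comp_eq_id_right {α γ : GpdMor G} (h : α.src = γ.tgt) {x : G}
    (hx : comp α γ h = id x) : γ = inv α := by
  obtain ⟨_, _, f⟩ := α
  obtain ⟨_, _, g⟩ := γ
  dsimp only at h
  subst h
  simp only [comp, id, mk.injEq] at hx
  obtain ⟨rfl, rfl, hgf⟩ := hx
  simp only [eqToHom_refl, Category.id_comp, heq_eq_eq] at hgf
  simp [inv, IsIso.eq_inv_of_hom_inv_id hgf]

end GpdMor

section Bisection

variable {G : Type*} [Groupoid G] {Λ Λ' : Set (GpdMor G)}

theorem injOn_src_of_setMul (hR : setMul Λ Λ' ⊆ tgtSet Λ) (hS : srcSet Λ ⊆ setMul Λ' Λ) :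
    Set.InjOn src Λ := by
  intro γ hγ δ hδ hγδ
  obtain ⟨α, hα, _, _, _, hid⟩ := hS ⟨γ, hγ, rfl⟩
  have hγα : γ.src = α.tgt := congrArg tgt hid
  have eq_inv_α : ∀ ε ∈ Λ, ε.src = α.tgt → ε = inv α := fun ε hε hεα => by
    obtain ⟨_, _, hεα_id⟩ := hR ⟨ε, hε, α, hα, hεα, rfl⟩
    exact eq_inv_of_comp_eq_id_left hεα hεα_id
  exact (eq_inv_α γ hγ hγα).trans (eq_inv_α δ hδ (hγδ ▸ hγα)).symm

theorem injOn_tgt_of_setMul (hR : tgtSet Λ ⊆ setMul Λ Λ') (hS : setMul Λ' Λ ⊆ srcSet Λ) :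
    Set.InjOn tgt Λ := by
  intro γ hγ δ hδ hγδ
  obtain ⟨_, _, α, hα, _, hid⟩ := hR ⟨γ, hγ, rfl⟩
  have hαγ : α.src = γ.tgt := (congrArg src hid).symm
  have eq_inv_α : ∀ ε ∈ Λ, α.src = ε.tgt → ε = inv α := fun ε hε hαε => by
    obtain ⟨_, _, hαε_id⟩ := hS ⟨α, hα, ε, hε, hαε, rfl⟩
    exact eq_inv_of_comp_eq_id_right hαε hαε_id
  exact (eq_inv_α γ hγ hαγ).trans (eq_inv_α δ hδ (hγδ ▸ hαγ)).symm

theorem setMul_starSet (hs : Set.InjOn src Λ) : setMul Λ (starSet Λ) = tgtSet Λ := by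
  ext μ
  constructor
  · rintro ⟨γ, hγ, _, ⟨δ, hδ, rfl⟩, hγδ, rfl⟩
    obtain rfl := hs hγ hδ hγδ
    exact ⟨γ, hγ, comp_inv_self γ⟩
  · rintro ⟨γ, hγ, rfl⟩
    exact ⟨γ, hγ, inv γ, ⟨γ, hγ, rfl⟩, rfl, (comp_inv_self γ).symm⟩

theorem starSet_setMul (ht : Set.InjOn tgt Λ) : setMul (starSet Λ) Λ = srcSet Λ := by
  ext μ
  constructor
  · rintro ⟨_, ⟨δ, hδ, rfl⟩, γ, hγ, hδγ, rfl⟩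
    obtain rfl := ht hδ hγ hδγ
    exact ⟨δ, hδ, inv_comp_self δ⟩
  · rintro ⟨γ, hγ, rfl⟩
    exact ⟨inv γ, ⟨γ, hγ, rfl⟩, γ, hγ, rfl, (inv_comp_self γ).symm⟩

end Bisection

/-- A set `Λ` of morphisms of a groupoid admits an inverse — a set `Λ'` with
`Λ·Λ' = r(Λ)` and `Λ'·Λ = s(Λ)` — if and only if the source and target maps are both
injective on `Λ`; and in that case `Λ* = {γ⁻¹ : γ ∈ Λ}` is such an inverse. -/
theorem invertible_iff_bisection
    {G : Type*} [Groupoid G] (Λ : Set (GpdMor G)) :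
    ((∃ Λ' : Set (GpdMor G), setMul Λ Λ' = tgtSet Λ ∧ setMul Λ' Λ = srcSet Λ) ↔
      ((∀ γ ∈ Λ, ∀ δ ∈ Λ, γ.src = δ.src → γ = δ) ∧
        (∀ γ ∈ Λ, ∀ δ ∈ Λ, γ.tgt = δ.tgt → γ = δ))) ∧
    (((∀ γ ∈ Λ, ∀ δ ∈ Λ, γ.src = δ.src → γ = δ) ∧
        (∀ γ ∈ Λ, ∀ δ ∈ Λ, γ.tgt = δ.tgt → γ = δ)) →
      setMul Λ (starSet Λ) = tgtSet Λ ∧ setMul (starSet Λ) Λ = srcSet Λ) := by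
  have star_inverse : ((∀ γ ∈ Λ, ∀ δ ∈ Λ, γ.src = δ.src → γ = δ) ∧
      (∀ γ ∈ Λ, ∀ δ ∈ Λ, γ.tgt = δ.tgt → γ = δ)) →
      setMul Λ (starSet Λ) = tgtSet Λ ∧ setMul (starSet Λ) Λ = srcSet Λ := fun ⟨hs, ht⟩ =>
    ⟨setMul_starSet fun γ hγ δ hδ => hs γ hγ δ hδ, starSet_setMul fun γ hγ δ hδ => ht γ hγ δ hδ⟩
  refine ⟨⟨fun ⟨Λ', hR, hS⟩ => ⟨?_, ?_⟩, fun h => ⟨starSet Λ, star_inverse h⟩⟩, star_inverse⟩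
  · exact fun γ hγ δ hδ => injOn_src_of_setMul hR.subset hS.superset hγ hδ
  · exact fun γ hγ δ hδ => injOn_tgt_of_setMul hR.superset hS.subset hγ hδ
end
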